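/- arXiv:1202.0750 — 2 statements merged into one kernel-verified Lean document; each statement's English description precedes it below -/
import Mathlib

section
/- Every induced subcomplex of a simplicial forest is a simplicial forest. In particular, every induced subcomplex of a simplicial tree is a simplicial forest. -/
noncomputable section
attribute [local instance] Classical.propDecidable

/-- The simplicial complex generated by a set of faces: all nonempty subsets. -/
def gen {V : Type} (S : Finset (Finset V)) : Finset (Finset V) :=
  S.biUnion fun F => F.powerset.filter (· ≠ ∅)

/-- The facets (maximal faces) of a complex given by its finite set of faces. -/
def facets {V : Type} (Δ : Finset (Finset V)) : Finset (Finset V) :=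
  Δ.filter fun F => ∀ G ∈ Δ, F ⊆ G → F = G

/-- A (finite, abstract) simplicial complex: nonempty faces, closed under nonempty subsets. -/
def IsComplex {V : Type} (Δ : Finset (Finset V)) : Prop :=
  ∅ ∉ Δ ∧ ∀ F ∈ Δ, ∀ G, G ⊆ F → G ≠ ∅ → G ∈ Δ

/-- `F` is a leaf of `Δ`: `F` is a facet which is either the only facet, or
there is another facet `G` (a joint) with `F ∩ (Δ ∖ F) ⊆ G`, i.e. the
intersection of `F` with any other facet is contained in `G`. -/
def IsLeaf {V : Type} (Δ : Finset (Finset V)) (F : Finset V) : Prop :=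
  F ∈ facets Δ ∧ (facets Δ = {F} ∨
    ∃ G ∈ facets Δ, G ≠ F ∧ ∀ H ∈ facets Δ, H ≠ F → F ∩ H ⊆ G)

def HasLeaf {V : Type} (Δ : Finset (Finset V)) : Prop := ∃ F, IsLeaf Δ F

/-- A forest: every nonempty subcollection (complex generated by a subset of the
facets) has a leaf. -/
def IsForest {V : Type} (Δ : Finset (Finset V)) : Prop :=
  ∀ S ⊆ facets Δ, S.Nonempty → HasLeaf (gen S)

/-- Vertex set of a complex. -/
def vtx {V : Type} (Δ : Finset (Finset V)) : Finset V := Δ.sup id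

/-- Connectedness: nonempty, and any two vertices are joined by a chain of faces. -/
def Conn {V : Type} (Δ : Finset (Finset V)) : Prop :=
  Δ.Nonempty ∧ ∀ u ∈ vtx Δ, ∀ v ∈ vtx Δ,
    Relation.ReflTransGen (fun a b => ∃ σ ∈ Δ, a ∈ σ ∧ b ∈ σ) u v

/-- A simplicial tree is a connected forest. -/
def IsTree {V : Type} (Δ : Finset (Finset V)) : Prop := Conn Δ ∧ IsForest Δ

/-- The induced subcomplex of `Δ` on a vertex set `X`: all faces contained in `X`. -/
def induced {V : Type} (Δ : Finset (Finset V)) (X : Finset V) : Finset (Finset V) :=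
  Δ.filter (· ⊆ X)

/-!
A subcollection `S` of facets of `Δ_X` lifts to a subcollection `T` of facets of `Δ` on which
`G ↦ G ∩ X` is a bijection onto `S`, because a facet `F` of `Δ_X` equals `G ∩ X` for every
facet `G ⊇ F` of `Δ`.
A leaf `L` of `⟨T⟩` with joint `G` then gives the leaf `L ∩ X` of `⟨S⟩` with joint `G ∩ X`,
since `(L ∩ X) ∩ (H ∩ X) ⊆ (L ∩ H) ∩ X`.
-/

section

variable {V : Type}

lemma mem_gen {S : Finset (Finset V)} {A : Finset V} :
    A ∈ gen S ↔ ∃ F ∈ S, A ⊆ F ∧ A ≠ ∅ := by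
  simp [gen]

lemma mem_facets {Δ : Finset (Finset V)} {F : Finset V} :
    F ∈ facets Δ ↔ F ∈ Δ ∧ ∀ G ∈ Δ, F ⊆ G → F = G :=
  Finset.mem_filter

lemma eq_of_mem_facets_of_subset {Δ : Finset (Finset V)} {F G : Finset V}
    (hF : F ∈ facets Δ) (hG : G ∈ facets Δ) (h : F ⊆ G) : F = G :=
  (mem_facets.1 hF).2 G (mem_facets.1 hG).1 h

lemma facets_gen_of_subset_facets {Δ S : Finset (Finset V)} (hΔ : ∅ ∉ Δ)
    (hS : S ⊆ facets Δ) : facets (gen S) = S := by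
  have hne : ∀ F ∈ S, F ≠ ∅ := fun F hF h => hΔ (h ▸ (mem_facets.1 (hS hF)).1)
  ext A
  rw [mem_facets]
  constructor
  · rintro ⟨hA, hmax⟩
    obtain ⟨F, hF, hAF, -⟩ := mem_gen.1 hA
    rwa [hmax F (mem_gen.2 ⟨F, hF, subset_rfl, hne F hF⟩) hAF]
  · intro hA
    refine ⟨mem_gen.2 ⟨A, hA, subset_rfl, hne A hA⟩, fun G hG hAG => ?_⟩
    obtain ⟨F, hF, hGF, -⟩ := mem_gen.1 hG
    have hAF : A = F := eq_of_mem_facets_of_subset (hS hA) (hS hF) (hAG.trans hGF)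
    exact hAG.antisymm (hAF ▸ hGF)

lemma exists_mem_facets_superset {Δ : Finset (Finset V)} {F : Finset V} (hF : F ∈ Δ) :
    ∃ G ∈ facets Δ, F ⊆ G := by
  obtain ⟨G, hG, hmax⟩ :=
    (Δ.filter (F ⊆ ·)).exists_maximal ⟨F, Finset.mem_filter.2 ⟨hF, subset_rfl⟩⟩
  obtain ⟨hGΔ, hFG⟩ := Finset.mem_filter.1 hG
  refine ⟨G, mem_facets.2 ⟨hGΔ, fun H hH hGH => ?_⟩, hFG⟩
  exact hGH.antisymm (hmax (Finset.mem_filter.2 ⟨hH, hFG.trans hGH⟩) hGH)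

lemma exists_mem_facets_inter_eq_of_mem_facets_induced {Δ : Finset (Finset V)}
    (hΔ : IsComplex Δ) {X F : Finset V} (hF : F ∈ facets (induced Δ X)) :
    ∃ G ∈ facets Δ, G ∩ X = F := by
  obtain ⟨hFind, hFmax⟩ := mem_facets.1 hF
  obtain ⟨hFΔ, hFX⟩ := Finset.mem_filter.1 hFind
  obtain ⟨G, hG, hFG⟩ := exists_mem_facets_superset hFΔ
  have hFGX : F ⊆ G ∩ X := Finset.subset_inter hFG hFX
  have hGX_ne : G ∩ X ≠ ∅ := fun h => hΔ.1 (Finset.subset_empty.1 (h ▸ hFGX) ▸ hFΔ)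
  have hGX : G ∩ X ∈ induced Δ X :=
    Finset.mem_filter.2 ⟨hΔ.2 G (mem_facets.1 hG).1 _ Finset.inter_subset_left hGX_ne,
      Finset.inter_subset_right⟩
  exact ⟨G, hG, (hFmax _ hGX hFGX).symm⟩

lemma IsLeaf.image_inter {T : Finset (Finset V)} {X L : Finset V}
    (hinj : Set.InjOn (· ∩ X) T) (hT : facets (gen T) = T)
    (hTX : facets (gen (T.image (· ∩ X))) = T.image (· ∩ X)) (hL : IsLeaf (gen T) L) :
    IsLeaf (gen (T.image (· ∩ X))) (L ∩ X) := by
  rw [IsLeaf, hT] at hL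
  rw [IsLeaf, hTX]
  obtain ⟨hLT, hsingle | ⟨G, hGT, hGL, hjoint⟩⟩ := hL
  · exact ⟨Finset.mem_image_of_mem _ hLT, Or.inl (by simp [hsingle])⟩
  refine ⟨Finset.mem_image_of_mem _ hLT, Or.inr ⟨G ∩ X, Finset.mem_image_of_mem _ hGT,
    fun h => hGL (hinj hGT hLT h), ?_⟩⟩
  rintro _ hH hHL
  obtain ⟨H, hHT, rfl⟩ := Finset.mem_image.1 hH
  have hsub : L ∩ H ⊆ G := hjoint H hHT (fun h => hHL (h ▸ rfl))
  intro v hv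
  simp only [Finset.mem_inter] at hv ⊢
  exact ⟨hsub (Finset.mem_inter.2 ⟨hv.1.1, hv.2.1⟩), hv.1.2⟩

lemma isForest_induced {Δ : Finset (Finset V)} (hΔ : IsComplex Δ) (hforest : IsForest Δ)
    (X : Finset V) : IsForest (induced Δ X) := by
  intro S hS hSne
  have hsurj : Set.SurjOn (· ∩ X) (facets Δ : Set (Finset V)) S := fun F hF =>
    exists_mem_facets_inter_eq_of_mem_facets_induced hΔ (hS hF)
  obtain ⟨T, hTsub, hinj, rfl⟩ := Finset.exists_subset_injOn_image_eq_of_surjOn _ _ hsurj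
  have hT : T ⊆ facets Δ := Finset.coe_subset.1 hTsub
  have hΔX : ∅ ∉ induced Δ X := fun h => hΔ.1 (Finset.mem_filter.1 h).1
  obtain ⟨L, hL⟩ := hforest T hT (Finset.image_nonempty.1 hSne)
  exact ⟨L ∩ X, hL.image_inter hinj (facets_gen_of_subset_facets hΔ.1 hT)
    (facets_gen_of_subset_facets hΔX hS)⟩

end

/-- Every induced subcomplex of a simplicial forest is a simplicial
forest; in particular, every induced subcomplex of a simplicial tree is a forest. -/
theorem induced_subcomplex_of_forest_isForest {V : Type} (Δ : Finset (Finset V))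
    (hΔ : IsComplex Δ) (X : Finset V) :
    (IsForest Δ → IsForest (induced Δ X)) ∧
    (IsTree Δ → IsForest (induced Δ X)) :=
  ⟨fun h => isForest_induced hΔ h X, fun h => isForest_induced hΔ h.2 X⟩
end
end

section
/- Every simplicial tree is collapsible. -/
noncomputable section
attribute [local instance] Classical.propDecidable

/-- An elementary collapse: remove a pair `{F, F'}` where `F'` is a maximal proper
face of the facet `F` and `F'` is a face of no other facet. -/
def ElemCollapse {V : Type} (Δ Δ' : Finset (Finset V)) : Prop :=
  ∃ F F', F ∈ facets Δ ∧ F' ∈ Δ ∧ F' ⊆ F ∧ F'.card + 1 = F.card ∧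
    (∀ G ∈ facets Δ, F' ⊆ G → G = F) ∧ Δ' = Δ \ {F, F'}

/-- `Δ` collapses to `Δ'` via a finite sequence of elementary collapses. -/
def CollapsesTo {V : Type} (Δ Δ' : Finset (Finset V)) : Prop :=
  Relation.ReflTransGen ElemCollapse Δ Δ'

/-- A complex is collapsible if it collapses to a single point. -/
def Collapsible {V : Type} (Δ : Finset (Finset V)) : Prop :=
  ∃ v : V, CollapsesTo Δ {{v}}

/-- The full simplex on a finite vertex set `F` : all nonempty subsets of `F`. -/
def fullSimplex {V : Type} (F : Finset V) : Finset (Finset V) :=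
  F.powerset.filter (· ≠ ∅)


section Aux

variable {V : Type}

lemma facets_subset (Δ : Finset (Finset V)) : facets Δ ⊆ Δ := Finset.filter_subset _ _

lemma exists_facet {Δ : Finset (Finset V)} {σ : Finset V} (hσ : σ ∈ Δ) :
    ∃ F ∈ facets Δ, σ ⊆ F := by
  obtain ⟨F, hF, hmax⟩ := (Δ.filter (fun τ => σ ⊆ τ)).exists_max_image Finset.card
    ⟨σ, by simp [hσ]⟩
  rw [Finset.mem_filter] at hF
  refine ⟨F, mem_facets.mpr ⟨hF.1, ?_⟩, hF.2⟩
  intro G hG hFG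
  exact Finset.eq_of_subset_of_card_le hFG (hmax G (by simp [hG, hF.2.trans hFG]))

lemma gen_facets {Δ : Finset (Finset V)} (hC : IsComplex Δ) : gen (facets Δ) = Δ := by
  ext σ
  simp only [gen, Finset.mem_biUnion, Finset.mem_filter, Finset.mem_powerset]
  constructor
  · rintro ⟨F, hF, hsub, hne⟩
    exact hC.2 F (facets_subset _ hF) σ hsub hne
  · intro hσ
    obtain ⟨F, hF, hsub⟩ := exists_facet hσ
    exact ⟨F, hF, hsub, fun h => hC.1 (h ▸ hσ)⟩

lemma batchCollapse (v : V) :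
    ∀ n (Δ T : Finset (Finset V)), T.card = n → IsComplex Δ →
    (∀ τ ∈ T, v ∉ τ ∧ τ ≠ ∅ ∧ insert v τ ∈ Δ) →
    (∀ τ ∈ T, ∀ ρ ∈ Δ, τ ⊆ ρ → v ∉ ρ → ρ ∈ T) →
    CollapsesTo Δ (Δ \ (T ∪ T.image (insert v))) := by
  intro n
  induction n with
  | zero =>
    intro Δ T hcard _ _ _
    rw [Finset.card_eq_zero] at hcard
    subst hcard
    simp only [Finset.image_empty, Finset.union_empty, Finset.sdiff_empty]
    exact Relation.ReflTransGen.refl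
  | succ n ih =>
    intro Δ T hcard hC h1 h2
    obtain ⟨τ, hτT, hmax⟩ := T.exists_max_image Finset.card
      (Finset.card_pos.mp (by omega))
    obtain ⟨hvτ, hτne, hins⟩ := h1 τ hτT
    have hτΔ : τ ∈ Δ := hC.2 _ hins τ (Finset.subset_insert _ _) hτne
    have hfacet : insert v τ ∈ facets Δ := by
      rw [mem_facets]
      refine ⟨hins, ?_⟩
      intro H hH hsub
      by_contra hne
      have hvH : v ∈ H := hsub (Finset.mem_insert_self _ _)
      have hτsub : τ ⊆ H.erase v :=
        Finset.subset_erase.mpr ⟨(Finset.subset_insert _ _).trans hsub, hvτ⟩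
      have hHeΔ : H.erase v ∈ Δ := hC.2 H hH _ (Finset.erase_subset _ _)
        (fun h => hτne (Finset.subset_empty.mp (h ▸ hτsub)))
      have hHeT : H.erase v ∈ T := h2 τ hτT _ hHeΔ hτsub (Finset.notMem_erase _ _)
      have heq : τ = H.erase v :=
        Finset.eq_of_subset_of_card_le hτsub (hmax _ hHeT)
      exact hne (by rw [heq, Finset.insert_erase hvH])
    have hfree : ∀ K ∈ facets Δ, τ ⊆ K → K = insert v τ := by
      intro K hK hsub
      rcases mem_facets.mp hK with ⟨hKΔ, hKmax⟩
      by_cases hvK : v ∈ K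
      · have hτsub : τ ⊆ K.erase v := Finset.subset_erase.mpr ⟨hsub, hvτ⟩
        have hKeΔ : K.erase v ∈ Δ := hC.2 K hKΔ _ (Finset.erase_subset _ _)
          (fun h => hτne (Finset.subset_empty.mp (h ▸ hτsub)))
        have hKeT : K.erase v ∈ T := h2 τ hτT _ hKeΔ hτsub (Finset.notMem_erase _ _)
        have heq : τ = K.erase v :=
          Finset.eq_of_subset_of_card_le hτsub (hmax _ hKeT)
        rw [heq, Finset.insert_erase hvK]
      · have hKT : K ∈ T := h2 τ hτT K hKΔ hsub hvK
        have : insert v K ∈ Δ := (h1 K hKT).2.2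
        have hKK : K = insert v K := hKmax _ this (Finset.subset_insert _ _)
        exact absurd (hKK ▸ Finset.mem_insert_self v K) hvK
    have hstep : ElemCollapse Δ (Δ \ {insert v τ, τ}) :=
      ⟨insert v τ, τ, hfacet, hτΔ, Finset.subset_insert _ _,
        by rw [Finset.card_insert_of_notMem hvτ],
        fun G hG hsub => hfree G hG hsub, rfl⟩
    set Δ₂ := Δ \ {insert v τ, τ} with hΔ₂
    have hmemΔ₂ : ∀ σ, σ ∈ Δ₂ ↔ σ ∈ Δ ∧ σ ≠ insert v τ ∧ σ ≠ τ := by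
      intro σ
      simp [hΔ₂, Finset.mem_sdiff, Finset.mem_insert, not_or]
    have hbetween : ∀ H : Finset V, τ ⊆ H → H ⊆ insert v τ → H = τ ∨ H = insert v τ := by
      intro H h1' h2'
      by_cases hvH : v ∈ H
      · right
        exact Finset.Subset.antisymm h2' (Finset.insert_subset hvH h1')
      · left
        refine Finset.Subset.antisymm ?_ h1'
        intro x hx
        rcases Finset.mem_insert.mp (h2' hx) with h | h
        · exact absurd (h ▸ hx) hvH
        · exact h
    have hC₂ : IsComplex Δ₂ := by
      constructor
      · intro h
        exact hC.1 ((hmemΔ₂ ∅).mp h).1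
      · intro H hH G hGH hGne
        rcases (hmemΔ₂ H).mp hH with ⟨hHΔ, hH1, hH2⟩
        rw [hmemΔ₂]
        refine ⟨hC.2 H hHΔ G hGH hGne, ?_, ?_⟩
        · rintro rfl
          exact hH1 ((mem_facets.mp hfacet).2 H hHΔ hGH).symm
        · intro hGτ
          obtain ⟨K, hK, hHK⟩ := exists_facet hHΔ
          have hτH : τ ⊆ H := hGτ ▸ hGH
          have hKeq : K = insert v τ := hfree K hK (hτH.trans hHK)
          rcases hbetween H hτH (hKeq ▸ hHK) with h | h
          · exact hH2 h
          · exact hH1 h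
    have hrec := ih Δ₂ (T.erase τ)
      (by rw [Finset.card_erase_of_mem hτT, hcard]; rfl) hC₂
      (by
        intro τ' hτ'
        rcases Finset.mem_erase.mp hτ' with ⟨hne', hτ'T⟩
        obtain ⟨hv', hne'', hins'⟩ := h1 τ' hτ'T
        refine ⟨hv', hne'', (hmemΔ₂ _).mpr ⟨hins', ?_, ?_⟩⟩
        · intro h
          apply hne'
          have := congrArg (Finset.erase · v) h
          simpa [Finset.erase_insert hv', Finset.erase_insert hvτ] using this
        · intro h
          exact hvτ (h ▸ Finset.mem_insert_self v τ'))
      (by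
        intro τ' hτ' ρ hρ hsub hvρ
        rcases Finset.mem_erase.mp hτ' with ⟨hne', hτ'T⟩
        have hρΔ : ρ ∈ Δ := ((hmemΔ₂ ρ).mp hρ).1
        have hρT : ρ ∈ T := h2 τ' hτ'T ρ hρΔ hsub hvρ
        exact Finset.mem_erase.mpr ⟨((hmemΔ₂ ρ).mp hρ).2.2, hρT⟩)
    have hseteq : Δ₂ \ ((T.erase τ) ∪ (T.erase τ).image (insert v)) =
        Δ \ (T ∪ T.image (insert v)) := by
      ext σ
      simp only [Finset.mem_sdiff, Finset.mem_union, Finset.mem_image,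
        Finset.mem_erase, hmemΔ₂, not_or, not_exists, not_and]
      constructor
      · rintro ⟨⟨hσΔ, hσ1, hσ2⟩, hσ3, hσ4⟩
        refine ⟨hσΔ, hσ3 hσ2, ?_⟩
        intro x hx heq
        by_cases h : x = τ
        · exact hσ1 (h ▸ heq).symm
        · exact hσ4 x ⟨h, hx⟩ heq
      · rintro ⟨hσΔ, hσT, hσI⟩
        exact ⟨⟨hσΔ, fun h => hσI τ hτT h.symm, fun h => hσT (h ▸ hτT)⟩,
          fun _ => hσT, fun x hx heq => hσI x hx.2 heq⟩
    exact (Relation.ReflTransGen.single hstep).trans (hseteq ▸ hrec)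

def FacetConn (Δ : Finset (Finset V)) : Prop :=
  ∀ H ∈ facets Δ, ∀ K ∈ facets Δ,
    Relation.ReflTransGen (fun A B => A ∈ facets Δ ∧ B ∈ facets Δ ∧ (A ∩ B).Nonempty) H K

lemma chain_to_facetChain {Δ : Finset (Finset V)} {b : V} {B : Finset V}
    (hB : B ∈ facets Δ) (hbB : b ∈ B) :
    ∀ {a : V}, Relation.ReflTransGen (fun x y => ∃ σ ∈ Δ, x ∈ σ ∧ y ∈ σ) a b →
    ∀ A ∈ facets Δ, a ∈ A →
    Relation.ReflTransGen (fun X Y => X ∈ facets Δ ∧ Y ∈ facets Δ ∧ (X ∩ Y).Nonempty) A B := by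
  intro a h
  induction h using Relation.ReflTransGen.head_induction_on with
  | refl =>
    intro A hA hbA
    exact Relation.ReflTransGen.single ⟨hA, hB, ⟨b, Finset.mem_inter.mpr ⟨hbA, hbB⟩⟩⟩
  | @head x c h1 h2 ih =>
    intro A hA haA
    obtain ⟨σ, hσΔ, hxσ, hcσ⟩ := h1
    obtain ⟨C, hCfac, hσC⟩ := exists_facet hσΔ
    exact Relation.ReflTransGen.head
      ⟨hA, hCfac, ⟨x, Finset.mem_inter.mpr ⟨haA, hσC hxσ⟩⟩⟩
      (ih C hCfac (hσC hcσ))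

lemma conn_facetConn {Δ : Finset (Finset V)} (hC : IsComplex Δ) (h : Conn Δ) :
    FacetConn Δ := by
  intro H hH K hK
  have hHne : H.Nonempty := Finset.nonempty_iff_ne_empty.mpr
    (fun he => hC.1 (he ▸ facets_subset _ hH))
  have hKne : K.Nonempty := Finset.nonempty_iff_ne_empty.mpr
    (fun he => hC.1 (he ▸ facets_subset _ hK))
  obtain ⟨u, hu⟩ := hHne
  obtain ⟨z, hz⟩ := hKne
  have huv : u ∈ vtx Δ := Finset.mem_sup.mpr ⟨H, facets_subset _ hH, hu⟩
  have hzv : z ∈ vtx Δ := Finset.mem_sup.mpr ⟨K, facets_subset _ hK, hz⟩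
  exact chain_to_facetChain hK hz (h.2 u huv z hzv) H hH hu

lemma firstStep {α : Type*} {e : α → α → Prop} {a b : α} :
    Relation.ReflTransGen e a b → a ≠ b → ∃ c, e a c ∧ c ≠ a := by
  intro h
  induction h using Relation.ReflTransGen.head_induction_on with
  | refl => intro h'; exact absurd rfl h'
  | @head x c h1 h2 ih =>
    intro hne
    by_cases hc : c = x
    · subst hc
      exact ih hne
    · exact ⟨c, h1, hc⟩

lemma main_aux : ∀ n (Δ : Finset (Finset V)), Δ.card ≤ n → IsComplex Δ →
    IsForest Δ → Δ.Nonempty → FacetConn Δ → Collapsible Δ := by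
  intro n
  induction n with
  | zero =>
    intro Δ hcard _ _ hne _
    have := Finset.card_pos.mpr hne
    omega
  | succ n ih =>
    intro Δ hcard hC hFor hne hFC
    obtain ⟨σ0, hσ0⟩ := hne
    obtain ⟨F0, hF0, -⟩ := exists_facet hσ0
    obtain ⟨F, hFleaf⟩ := hFor (facets Δ) (Finset.Subset.refl _) ⟨F0, hF0⟩
    rw [gen_facets hC] at hFleaf
    obtain ⟨hFfac, hcase⟩ := hFleaf
    have hFΔ : F ∈ Δ := facets_subset _ hFfac
    have hFne : F.Nonempty := Finset.nonempty_iff_ne_empty.mpr (fun h => hC.1 (h ▸ hFΔ))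
    rcases hcase with hsingle | ⟨G, hGfac, hGF, hjoint⟩
    · -- single facet: Δ is the full simplex on F, collapse onto a vertex
      obtain ⟨v, hvF⟩ := hFne
      have hsubF : ∀ σ ∈ Δ, σ ⊆ F := by
        intro σ hσ
        obtain ⟨K, hK, hσK⟩ := exists_facet hσ
        rw [hsingle, Finset.mem_singleton] at hK
        rwa [hK] at hσK
      set T := Δ.filter (fun σ => v ∉ σ) with hT
      have hbatch := batchCollapse v T.card Δ T rfl hC
        (by
          intro τ hτ
          rw [hT, Finset.mem_filter] at hτ
          refine ⟨hτ.2, fun h => hC.1 (h ▸ hτ.1), ?_⟩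
          exact hC.2 F hFΔ _ (Finset.insert_subset hvF (hsubF τ hτ.1))
            (Finset.insert_ne_empty _ _))
        (by
          intro τ hτ ρ hρ hsub hvρ
          rw [hT, Finset.mem_filter]
          exact ⟨hρ, hvρ⟩)
      have heq : Δ \ (T ∪ T.image (insert v)) = {{v}} := by
        ext σ
        rw [Finset.mem_sdiff, Finset.mem_union, Finset.mem_singleton]
        constructor
        · rintro ⟨hσΔ, hnot⟩
          have h1' : σ ∉ T := fun h => hnot (Or.inl h)
          have h2' : σ ∉ T.image (insert v) := fun h => hnot (Or.inr h)
          have hvσ : v ∈ σ := by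
            by_contra hv
            exact h1' (by rw [hT, Finset.mem_filter]; exact ⟨hσΔ, hv⟩)
          by_contra hne'
          have hns : ¬ σ ⊆ {v} := fun hs =>
            hne' (Finset.Subset.antisymm hs (Finset.singleton_subset_iff.mpr hvσ))
          obtain ⟨x, hxσ, hxv⟩ := Finset.not_subset.mp hns
          have hxv' : x ≠ v := by simpa using hxv
          have hxe : x ∈ σ.erase v := Finset.mem_erase.mpr ⟨hxv', hxσ⟩
          have heΔ : σ.erase v ∈ Δ := hC.2 σ hσΔ _ (Finset.erase_subset _ _)
            (Finset.ne_empty_of_mem hxe)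
          refine h2' (Finset.mem_image.mpr ⟨σ.erase v, ?_, Finset.insert_erase hvσ⟩)
          rw [hT, Finset.mem_filter]
          exact ⟨heΔ, Finset.notMem_erase _ _⟩
        · rintro rfl
          have hvΔ : {v} ∈ Δ := hC.2 F hFΔ {v}
            (Finset.singleton_subset_iff.mpr hvF) (Finset.singleton_ne_empty v)
          refine ⟨hvΔ, ?_⟩
          rintro (h | h)
          · rw [hT, Finset.mem_filter] at h
            exact h.2 (Finset.mem_singleton_self v)
          · obtain ⟨x, hx, heq'⟩ := Finset.mem_image.mp h
            rw [hT, Finset.mem_filter] at hx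
            have hxs : x ⊆ {v} := heq' ▸ Finset.subset_insert _ _
            rcases Finset.subset_singleton_iff.mp hxs with h' | h'
            · exact hC.1 (h' ▸ hx.1)
            · exact hx.2 (h' ▸ Finset.mem_singleton_self v)
      exact ⟨v, heq ▸ hbatch⟩
    · -- leaf with joint G
      have hGΔ : G ∈ Δ := facets_subset _ hGfac
      obtain ⟨v, hvF, hvG⟩ : ∃ v ∈ F, v ∉ G := by
        rcases Finset.not_subset.mp (fun hsub : F ⊆ G =>
          hGF ((mem_facets.mp hFfac).2 G hGΔ hsub).symm) with ⟨v, hv1, hv2⟩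
        exact ⟨v, hv1, hv2⟩
      have hvFG : v ∈ F \ G := Finset.mem_sdiff.mpr ⟨hvF, hvG⟩
      have hsubF' : ∀ σ ∈ Δ, (σ ∩ (F \ G)).Nonempty → σ ⊆ F := by
        intro σ hσ ⟨x, hx⟩
        obtain ⟨K, hKfac, hσK⟩ := exists_facet hσ
        by_cases hKF : K = F
        · rwa [hKF] at hσK
        · exfalso
          rw [Finset.mem_inter, Finset.mem_sdiff] at hx
          exact hx.2.2 (hjoint K hKfac hKF
            (Finset.mem_inter.mpr ⟨hx.2.1, hσK hx.1⟩))
      have hvsubF : ∀ σ ∈ Δ, v ∈ σ → σ ⊆ F := by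
        intro σ hσ hvσ
        obtain ⟨K, hKfac, hσK⟩ := exists_facet hσ
        by_cases hKF : K = F
        · rwa [hKF] at hσK
        · exact absurd (hjoint K hKfac hKF (Finset.mem_inter.mpr ⟨hvF, hσK hvσ⟩)) hvG
      -- find w ∈ F ∩ G via facet connectivity
      obtain ⟨H, ⟨-, hHfac, hFH⟩, hHF⟩ :=
        firstStep (hFC F hFfac G hGfac) (fun h => hGF h.symm)
      obtain ⟨w, hw⟩ := hFH
      have hwF : w ∈ F := (Finset.mem_inter.mp hw).1
      have hwG : w ∈ G := hjoint H hHfac hHF hw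
      have hwv : w ≠ v := fun h => hvG (h ▸ hwG)
      -- Phase 1
      set T₁ := Δ.filter (fun σ => (σ ∩ (F \ G)).Nonempty ∧ v ∉ σ) with hT₁
      have hbatch1 := batchCollapse v T₁.card Δ T₁ rfl hC
        (by
          intro τ hτ
          rw [hT₁, Finset.mem_filter] at hτ
          obtain ⟨hτΔ, hint, hv⟩ := hτ
          refine ⟨hv, fun h => hC.1 (h ▸ hτΔ), ?_⟩
          exact hC.2 F hFΔ _ (Finset.insert_subset hvF (hsubF' τ hτΔ hint))
            (Finset.insert_ne_empty _ _))
        (by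
          intro τ hτ ρ hρ hsub hvρ
          rw [hT₁, Finset.mem_filter] at hτ ⊢
          obtain ⟨x, hx⟩ := hτ.2.1
          rw [Finset.mem_inter] at hx
          exact ⟨hρ, ⟨x, Finset.mem_inter.mpr ⟨hsub hx.1, hx.2⟩⟩, hvρ⟩)
      set Δ' := Δ.filter (fun σ => σ ∩ (F \ G) ⊆ {v}) with hΔ'
      have hmemΔ' : ∀ σ, σ ∈ Δ' ↔ σ ∈ Δ ∧ σ ∩ (F \ G) ⊆ {v} := by
        intro σ
        rw [hΔ', Finset.mem_filter]
      have hE1 : Δ \ (T₁ ∪ T₁.image (insert v)) = Δ' := by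
        ext σ
        rw [Finset.mem_sdiff, Finset.mem_union, hmemΔ' σ]
        constructor
        · rintro ⟨hσΔ, hnot⟩
          have h1' : σ ∉ T₁ := fun h => hnot (Or.inl h)
          have h2' : σ ∉ T₁.image (insert v) := fun h => hnot (Or.inr h)
          refine ⟨hσΔ, ?_⟩
          by_contra hns
          obtain ⟨x, hxσ, hxv⟩ := Finset.not_subset.mp hns
          have hxv' : x ≠ v := by simpa using hxv
          rw [Finset.mem_inter] at hxσ
          by_cases hvσ : v ∈ σ
          · have hxe : x ∈ σ.erase v := Finset.mem_erase.mpr ⟨hxv', hxσ.1⟩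
            have heΔ : σ.erase v ∈ Δ := hC.2 σ hσΔ _ (Finset.erase_subset _ _)
              (Finset.ne_empty_of_mem hxe)
            refine h2' (Finset.mem_image.mpr ⟨σ.erase v, ?_, Finset.insert_erase hvσ⟩)
            rw [hT₁, Finset.mem_filter]
            exact ⟨heΔ, ⟨x, Finset.mem_inter.mpr ⟨hxe, hxσ.2⟩⟩, Finset.notMem_erase _ _⟩
          · refine h1' ?_
            rw [hT₁, Finset.mem_filter]
            exact ⟨hσΔ, ⟨x, Finset.mem_inter.mpr hxσ⟩, hvσ⟩
        · rintro ⟨hσΔ, hsv⟩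
          refine ⟨hσΔ, ?_⟩
          rintro (h | h)
          · rw [hT₁, Finset.mem_filter] at h
            obtain ⟨-, ⟨x, hx⟩, hvσ⟩ := h
            have hxv := hsv hx
            rw [Finset.mem_singleton] at hxv
            exact hvσ (hxv ▸ (Finset.mem_inter.mp hx).1)
          · obtain ⟨x, hx, heq'⟩ := Finset.mem_image.mp h
            rw [hT₁, Finset.mem_filter] at hx
            obtain ⟨hxΔ, ⟨y, hy⟩, hvx⟩ := hx
            rw [Finset.mem_inter] at hy
            have hyσ : y ∈ σ ∩ (F \ G) := by
              rw [Finset.mem_inter]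
              exact ⟨heq' ▸ Finset.mem_insert_of_mem hy.1, hy.2⟩
            have hyv := hsv hyσ
            rw [Finset.mem_singleton] at hyv
            exact hvx (hyv ▸ hy.1)
      rw [hE1] at hbatch1
      have hΔ'sub : Δ' ⊆ Δ := hΔ' ▸ Finset.filter_subset _ _
      have hC' : IsComplex Δ' := by
        constructor
        · exact fun h => hC.1 (hΔ'sub h)
        · intro H' hH' G' hG'H hG'ne
          rcases (hmemΔ' H').mp hH' with ⟨hHΔ, hHs⟩
          exact (hmemΔ' G').mpr ⟨hC.2 H' hHΔ G' hG'H hG'ne,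
            (Finset.inter_subset_inter hG'H (Finset.Subset.refl _)).trans hHs⟩
      -- Phase 2
      set T₂ := Δ'.filter (fun σ => v ∈ σ ∧ w ∉ σ) with hT₂
      have hbatch2 := batchCollapse w T₂.card Δ' T₂ rfl hC'
        (by
          intro τ hτ
          rw [hT₂, Finset.mem_filter] at hτ
          obtain ⟨hτΔ', hvτ, hwτ⟩ := hτ
          have hτΔ : τ ∈ Δ := hΔ'sub hτΔ'
          refine ⟨hwτ, Finset.ne_empty_of_mem hvτ, ?_⟩
          rw [hmemΔ']
          constructor
          · exact hC.2 F hFΔ _ (Finset.insert_subset hwF (hvsubF τ hτΔ hvτ))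
              (Finset.insert_ne_empty _ _)
          · intro x hx
            rw [Finset.mem_inter, Finset.mem_insert] at hx
            rcases hx.1 with h | h
            · exact absurd (Finset.mem_sdiff.mp hx.2).2 (not_not.mpr (h ▸ hwG))
            · exact ((hmemΔ' τ).mp hτΔ').2 (Finset.mem_inter.mpr ⟨h, hx.2⟩))
        (by
          intro τ hτ ρ hρ hsub hwρ
          rw [hT₂, Finset.mem_filter] at hτ ⊢
          exact ⟨hρ, hsub hτ.2.1, hwρ⟩)
      set Δ'' := Δ.filter (fun σ => σ ∩ (F \ G) = ∅) with hΔ''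
      have hmemΔ'' : ∀ σ, σ ∈ Δ'' ↔ σ ∈ Δ ∧ σ ∩ (F \ G) = ∅ := by
        intro σ
        rw [hΔ'', Finset.mem_filter]
      have hE2 : Δ' \ (T₂ ∪ T₂.image (insert w)) = Δ'' := by
        ext σ
        rw [Finset.mem_sdiff, Finset.mem_union, hmemΔ'' σ]
        constructor
        · rintro ⟨hσΔ', hnot⟩
          have h1' : σ ∉ T₂ := fun h => hnot (Or.inl h)
          have h2' : σ ∉ T₂.image (insert w) := fun h => hnot (Or.inr h)
          rcases (hmemΔ' σ).mp hσΔ' with ⟨hσΔ, hsv⟩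
          have hvσ : v ∉ σ := by
            intro hvσ
            by_cases hwσ : w ∈ σ
            · have hvτ : v ∈ σ.erase w := Finset.mem_erase.mpr ⟨fun h => hwv h.symm, hvσ⟩
              have heΔ' : σ.erase w ∈ Δ' := hC'.2 σ hσΔ' _ (Finset.erase_subset _ _)
                (Finset.ne_empty_of_mem hvτ)
              refine h2' (Finset.mem_image.mpr ⟨σ.erase w, ?_, Finset.insert_erase hwσ⟩)
              rw [hT₂, Finset.mem_filter]
              exact ⟨heΔ', hvτ, Finset.notMem_erase _ _⟩
            · refine h1' ?_
              rw [hT₂, Finset.mem_filter]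
              exact ⟨hσΔ', hvσ, hwσ⟩
          refine ⟨hσΔ, Finset.eq_empty_iff_forall_notMem.mpr ?_⟩
          intro x hx
          have hxv := hsv hx
          rw [Finset.mem_singleton] at hxv
          exact hvσ (hxv ▸ (Finset.mem_inter.mp hx).1)
        · rintro ⟨hσΔ, hint⟩
          have hvσ : v ∉ σ := by
            intro hvσ
            have hmem' : v ∈ σ ∩ (F \ G) := Finset.mem_inter.mpr ⟨hvσ, hvFG⟩
            rw [hint] at hmem'
            exact absurd hmem' (Finset.notMem_empty v)
          have hσΔ' : σ ∈ Δ' := (hmemΔ' σ).mpr ⟨hσΔ, by rw [hint]; exact Finset.empty_subset _⟩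
          refine ⟨hσΔ', ?_⟩
          rintro (h | h)
          · rw [hT₂, Finset.mem_filter] at h
            exact hvσ h.2.1
          · obtain ⟨x, hx, heq'⟩ := Finset.mem_image.mp h
            rw [hT₂, Finset.mem_filter] at hx
            exact hvσ (heq' ▸ Finset.mem_insert_of_mem hx.2.1)
      rw [hE2] at hbatch2
      have hΔ''sub : Δ'' ⊆ Δ := hΔ'' ▸ Finset.filter_subset _ _
      have hC'' : IsComplex Δ'' := by
        constructor
        · exact fun h => hC.1 (hΔ''sub h)
        · intro H' hH' G' hG'H hG'ne
          rcases (hmemΔ'' H').mp hH' with ⟨hHΔ, hHs⟩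
          refine (hmemΔ'' G').mpr ⟨hC.2 H' hHΔ G' hG'H hG'ne, ?_⟩
          rw [← Finset.subset_empty, ← hHs]
          exact Finset.inter_subset_inter hG'H (Finset.Subset.refl _)
      have hGΔ'' : G ∈ Δ'' := (hmemΔ'' G).mpr ⟨hGΔ,
        Finset.eq_empty_iff_forall_notMem.mpr
          (fun x hx => (Finset.mem_sdiff.mp (Finset.mem_inter.mp hx).2).2
            ((Finset.mem_inter.mp hx).1))⟩
      have hFΔ''not : F ∉ Δ'' := by
        intro h
        have := ((hmemΔ'' F).mp h).2
        have hv' : v ∈ F ∩ (F \ G) := Finset.mem_inter.mpr ⟨hvF, hvFG⟩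
        rw [this] at hv'
        exact absurd hv' (Finset.notMem_empty v)
      have hkeep : ∀ K ∈ facets Δ, K ≠ F → K ∈ Δ'' := by
        intro K hKfac hKF
        refine (hmemΔ'' K).mpr ⟨facets_subset _ hKfac, Finset.eq_empty_iff_forall_notMem.mpr ?_⟩
        intro x hx
        rw [Finset.mem_inter, Finset.mem_sdiff] at hx
        exact hx.2.2 (hjoint K hKfac hKF (Finset.mem_inter.mpr ⟨hx.2.1, hx.1⟩))
      have hfac'' : ∀ H', H' ∈ facets Δ'' ↔ H' ∈ facets Δ ∧ H' ≠ F := by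
        intro H'
        constructor
        · intro hH'
          rcases mem_facets.mp hH' with ⟨hH'Δ'', hH'max⟩
          have hH'Δ : H' ∈ Δ := hΔ''sub hH'Δ''
          obtain ⟨K, hKfac, hH'K⟩ := exists_facet hH'Δ
          by_cases hKF : K = F
          · have hH'G : H' ⊆ G := by
              intro x hx
              have hxF : x ∈ F := hKF ▸ hH'K hx
              by_contra hxG
              have : x ∈ H' ∩ (F \ G) :=
                Finset.mem_inter.mpr ⟨hx, Finset.mem_sdiff.mpr ⟨hxF, hxG⟩⟩
              rw [((hmemΔ'' H').mp hH'Δ'').2] at this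
              exact absurd this (Finset.notMem_empty x)
            have : H' = G := hH'max G hGΔ'' hH'G
            rw [this]
            exact ⟨hGfac, hGF⟩
          · have : H' = K := hH'max K (hkeep K hKfac hKF) hH'K
            rw [this]
            exact ⟨hKfac, hKF⟩
        · rintro ⟨hH'fac, hH'F⟩
          rcases mem_facets.mp hH'fac with ⟨hH'Δ, hH'max⟩
          refine mem_facets.mpr ⟨hkeep H' hH'fac hH'F, ?_⟩
          intro G' hG' hsub
          exact hH'max G' (hΔ''sub hG') hsub
      have hFor'' : IsForest Δ'' := by
        intro S hS hSne
        exact hFor S (fun x hx => ((hfac'' x).mp (hS hx)).1) hSne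
      have hne'' : Δ''.Nonempty := ⟨G, hGΔ''⟩
      have hGne : G.Nonempty := Finset.nonempty_iff_ne_empty.mpr (fun h => hC.1 (h ▸ hGΔ))
      have hFC'' : FacetConn Δ'' := by
        intro H' hH' K' hK'
        obtain ⟨hH'Δ, hH'F⟩ := (hfac'' H').mp hH'
        obtain ⟨hK'Δ, hK'F⟩ := (hfac'' K').mp hK'
        have path := hFC H' hH'Δ K' hK'Δ
        have hmap : ∀ a b : Finset V,
            Relation.ReflTransGen
              (fun A B => A ∈ facets Δ ∧ B ∈ facets Δ ∧ (A ∩ B).Nonempty) a b →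
            Relation.ReflTransGen
              (fun A B => A ∈ facets Δ'' ∧ B ∈ facets Δ'' ∧ (A ∩ B).Nonempty)
              (if a = F then G else a) (if b = F then G else b) := by
          intro a b hab
          induction hab with
          | refl => exact Relation.ReflTransGen.refl
          | @tail y z hxy hyz ihm =>
            refine ihm.tail ?_
            obtain ⟨hy, hz, hyz'⟩ := hyz
            have hmem : ∀ X, X ∈ facets Δ → (if X = F then G else X) ∈ facets Δ'' := by
              intro X hX
              by_cases h : X = F
              · rw [if_pos h]
                exact (hfac'' G).mpr ⟨hGfac, hGF⟩
              · rw [if_neg h]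
                exact (hfac'' X).mpr ⟨hX, h⟩
            refine ⟨hmem y hy, hmem z hz, ?_⟩
            by_cases hyF : y = F <;> by_cases hzF : z = F
            · rw [if_pos hyF, if_pos hzF]
              simpa using hGne
            · rw [if_pos hyF, if_neg hzF]
              obtain ⟨x, hx⟩ := hyz'
              rw [hyF] at hx
              exact ⟨x, Finset.mem_inter.mpr
                ⟨hjoint z hz hzF hx, (Finset.mem_inter.mp hx).2⟩⟩
            · rw [if_neg hyF, if_pos hzF]
              obtain ⟨x, hx⟩ := hyz'
              rw [hzF] at hx
              rw [Finset.mem_inter] at hx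
              exact ⟨x, Finset.mem_inter.mpr
                ⟨hx.1, hjoint y hy hyF (Finset.mem_inter.mpr ⟨hx.2, hx.1⟩)⟩⟩
            · rw [if_neg hyF, if_neg hzF]
              exact hyz'
        have := hmap H' K' path
        rwa [if_neg hH'F, if_neg hK'F] at this
      have hcard'' : Δ''.card ≤ n := by
        have hlt : Δ''.card < Δ.card :=
          Finset.card_lt_card ((Finset.ssubset_iff_of_subset hΔ''sub).mpr
            ⟨F, hFΔ, hFΔ''not⟩)
        omega
      obtain ⟨z, hz⟩ := ih Δ'' hcard'' hC'' hFor'' hne'' hFC''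
      exact ⟨z, (hbatch1.trans hbatch2).trans hz⟩

end Aux

/-- Every simplicial tree is collapsible. -/
theorem tree_collapsible {V : Type} (Δ : Finset (Finset V))
    (hΔ : IsComplex Δ) (hT : IsTree Δ) : Collapsible Δ := by
  obtain ⟨hconn, hfor⟩ := hT
  exact main_aux Δ.card Δ le_rfl hΔ hfor hconn.1 (conn_facetConn hΔ hconn)
end
end
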